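/- Let φ be a state on ℓ∞(κ) such that the supremum, over all finite subsets I ⊆ κ, of the real part of ν_φ(I) equals 1. Then φ is completely additive: for every index type ι and every family (A_α)_{α∈ι} of pairwise disjoint subsets of κ, ν_φ(⋃_α A_α) = ∑'_α ν_φ(A_α). -/

import Mathlib

/-!
Monotonicity and finite additivity of `ν_φ` make `∑ α ∈ S, ν_φ(A α) ≤ ν_φ(⋃ α, A α)` for every
finite `S`. Conversely, the hypothesis on finite sets says that `ν_φ` is concentrated, up to any
`ε > 0`, on a finite set `I`; so `ν_φ(U) ≤ ν_φ(U ∩ I) + ε` for every `U`, and the finite set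
`U ∩ I` meets only finitely many of the `A α`. Hence `ν_φ(⋃ α, A α)` is the least upper bound of
the finite partial sums.
-/

open scoped ENNReal
open Filter

universe u

/-- The indicator function of `I` as an element of `ℓ∞(κ)`. -/
noncomputable def chi {κ : Type*} (I : Set κ) : lp (fun _ : κ => ℂ) ∞ :=
  ⟨I.indicator (fun _ => (1 : ℂ)), memℓp_infty ⟨1, by
    rintro x ⟨i, rfl⟩
    by_cases h : i ∈ I <;> simp [Set.indicator, h]⟩⟩

/-- A state on `ℓ∞(κ)`: a continuous linear functional with `φ 1 = 1` that takes
nonnegative real values on functions with nonnegative real values. -/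
structure IsState {κ : Type*} (φ : lp (fun _ : κ => ℂ) ∞ →L[ℂ] ℂ) : Prop where
  map_one : φ 1 = 1
  nonneg : ∀ f : lp (fun _ : κ => ℂ) ∞,
    (∀ i, ∃ r : ℝ, 0 ≤ r ∧ f i = r) → ∃ r : ℝ, 0 ≤ r ∧ φ f = r

section chi

variable {κ : Type*}

lemma coe_chi (I : Set κ) : ⇑(chi I) = I.indicator (fun _ => (1 : ℂ)) := rfl

lemma chi_union {I J : Set κ} (h : Disjoint I J) : chi (I ∪ J) = chi I + chi J :=
  lp.ext (Set.indicator_union_of_disjoint h _)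

lemma chi_univ : chi (Set.univ : Set κ) = 1 :=
  lp.ext (Set.indicator_univ _)

lemma chi_biUnion_finset {ι : Type*} {A : ι → Set κ} (hA : Pairwise (Function.onFun Disjoint A))
    (S : Finset ι) : chi (⋃ α ∈ S, A α) = ∑ α ∈ S, chi (A α) := by
  apply lp.ext
  rw [lp.coeFn_sum, coe_chi, Finset.indicator_biUnion S A (hA.set_pairwise _)]
  ext x
  simp [coe_chi]

end chi

namespace IsState

variable {κ : Type*} {φ : lp (fun _ : κ => ℂ) ∞ →L[ℂ] ℂ}

lemma exists_map_chi_eq_ofReal (hφ : IsState φ) (I : Set κ) :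
    ∃ r : ℝ, 0 ≤ r ∧ φ (chi I) = r := by
  refine hφ.nonneg (chi I) fun i => ?_
  by_cases h : i ∈ I
  · exact ⟨1, zero_le_one, by simp [coe_chi, h]⟩
  · exact ⟨0, le_rfl, by simp [coe_chi, h]⟩

lemma re_map_chi_nonneg (hφ : IsState φ) (I : Set κ) : 0 ≤ (φ (chi I)).re := by
  obtain ⟨r, hr, hφr⟩ := hφ.exists_map_chi_eq_ofReal I
  simpa [hφr] using hr

lemma ofReal_re_map_chi (hφ : IsState φ) (I : Set κ) : ((φ (chi I)).re : ℂ) = φ (chi I) := by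
  obtain ⟨r, -, hφr⟩ := hφ.exists_map_chi_eq_ofReal I
  simp [hφr]

lemma re_map_chi_union {I J : Set κ} (h : Disjoint I J) :
    (φ (chi (I ∪ J))).re = (φ (chi I)).re + (φ (chi J)).re := by
  rw [chi_union h, map_add, Complex.add_re]

lemma re_map_chi_mono (hφ : IsState φ) {I J : Set κ} (h : I ⊆ J) :
    (φ (chi I)).re ≤ (φ (chi J)).re := by
  rw [← Set.union_sdiff_cancel h, re_map_chi_union Set.disjoint_sdiff_right]
  exact le_add_of_nonneg_right (hφ.re_map_chi_nonneg _)

lemma re_map_chi_univ (hφ : IsState φ) : (φ (chi (Set.univ : Set κ))).re = 1 := by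
  simp [chi_univ, hφ.map_one]

lemma exists_finite_re_map_chi_compl_lt (hφ : IsState φ)
    (hsup : (⨆ I : {I : Set κ // I.Finite}, (φ (chi I.1)).re) = 1) {ε : ℝ} (hε : 0 < ε) :
    ∃ I : Set κ, I.Finite ∧ (φ (chi Iᶜ)).re < ε := by
  obtain ⟨⟨I, hI⟩, hεI⟩ := exists_lt_of_lt_ciSup (show 1 - ε < _ by rw [hsup]; linarith)
  refine ⟨I, hI, ?_⟩
  have hsplit := re_map_chi_union (φ := φ) (disjoint_compl_right (a := I))
  rw [Set.union_compl_self, hφ.re_map_chi_univ] at hsplit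
  linarith

lemma re_map_chi_le_of_forall_finite_subset (hφ : IsState φ)
    (hsup : (⨆ I : {I : Set κ // I.Finite}, (φ (chi I.1)).re) = 1) {U : Set κ} {c : ℝ}
    (h : ∀ F ⊆ U, F.Finite → (φ (chi F)).re ≤ c) : (φ (chi U)).re ≤ c := by
  refine le_of_forall_pos_le_add fun ε hε => ?_
  obtain ⟨I, hI, hIε⟩ := hφ.exists_finite_re_map_chi_compl_lt hsup hε
  calc (φ (chi U)).re = (φ (chi (U ∩ I))).re + (φ (chi (U \ I))).re := by
        rw [← re_map_chi_union (Set.disjoint_sdiff_inter.symm), Set.inter_union_sdiff]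
    _ ≤ c + ε := by
        gcongr
        · exact h _ Set.inter_subset_left (hI.subset Set.inter_subset_right)
        · exact (hφ.re_map_chi_mono (Set.sdiff_subset_compl U I)).trans hIε.le

theorem hasSum_re_map_chi_iUnion (hφ : IsState φ)
    (hsup : (⨆ I : {I : Set κ // I.Finite}, (φ (chi I.1)).re) = 1) {ι : Type*}
    {A : ι → Set κ} (hA : Pairwise (Function.onFun Disjoint A)) :
    HasSum (fun α => (φ (chi (A α))).re) (φ (chi (⋃ α, A α))).re := by
  have partialSum_eq (S : Finset ι) :
      ∑ α ∈ S, (φ (chi (A α))).re = (φ (chi (⋃ α ∈ S, A α))).re := by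
    rw [chi_biUnion_finset hA, map_sum, Complex.re_sum]
  refine hasSum_of_isLUB_of_nonneg _ (fun α => hφ.re_map_chi_nonneg _) ⟨?_, fun c hc => ?_⟩
  · rintro _ ⟨S, rfl⟩
    beta_reduce
    rw [partialSum_eq]
    exact hφ.re_map_chi_mono (Set.iUnion₂_subset fun α _ => Set.subset_iUnion A α)
  · refine hφ.re_map_chi_le_of_forall_finite_subset hsup fun F hFU hF => ?_
    obtain ⟨T, hT, hFT⟩ := Set.finite_subset_iUnion hF hFU
    calc (φ (chi F)).re ≤ (φ (chi (⋃ α ∈ hT.toFinset, A α))).re :=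
          hφ.re_map_chi_mono (by simpa using hFT)
      _ ≤ c := by rw [← partialSum_eq]; exact hc ⟨_, rfl⟩

end IsState

theorem stmt_6_general {κ : Type u} (φ : lp (fun _ : κ => ℂ) ∞ →L[ℂ] ℂ)
    (hφ : IsState φ)
    (hsup : (⨆ I : {I : Set κ // I.Finite}, (φ (chi I.1)).re) = 1) :
    ∀ (ι : Type u) (A : ι → Set κ), Pairwise (Function.onFun Disjoint A) →
      φ (chi (⋃ α, A α)) = ∑' α, φ (chi (A α)) := by
  intro ι A hA
  have hsum := Complex.hasSum_ofReal.mpr (hφ.hasSum_re_map_chi_iUnion hsup hA)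
  simp only [hφ.ofReal_re_map_chi] at hsum
  exact hsum.tsum_eq.symm

theorem stmt_6 {κ : Type u} [Infinite κ] (φ : lp (fun _ : κ => ℂ) ∞ →L[ℂ] ℂ)
    (hφ : IsState φ)
    (hsup : (⨆ I : {I : Set κ // I.Finite}, (φ (chi I.1)).re) = 1) :
    ∀ (ι : Type u) (A : ι → Set κ), Pairwise (Function.onFun Disjoint A) →
      φ (chi (⋃ α, A α)) = ∑' α, φ (chi (A α)) :=
  stmt_6_general φ hφ hsup
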